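/- Let G be a 3-connected finite simple graph and let S ⊆ V(G) be an independent set of exactly 3 vertices such that G − S has exactly c connected components with c ≥ 3, and every component of G − S contains a neighbor of each of the three vertices of S. Then G has a spanning closed walk (using each edge at most twice) meeting each vertex of S at most ⌈c/3⌉ times. -/

import Mathlib

open scoped Classical in
/-- Number of occurrences of `a` in the list `l` (classical count). -/
noncomputable def listCount {α : Type*} (l : List α) (a : α) : ℕ := l.count a

namespace SimpleGraph

variable {V : Type*}

/-- A spanning closed walk that uses each edge at most twice. -/
def IsGoodWalk {G : SimpleGraph V} {v : V} (w : G.Walk v v) : Prop :=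
  (∀ u, u ∈ w.support) ∧ ∀ e, listCount w.edges e ≤ 2

/-- The closed walk `w` meets the vertex `u` at most `k` times, where the initial vertex of
the closed walk is counted once for its appearance as start/end. -/
def VisitsAtMost {G : SimpleGraph V} {v : V} (w : G.Walk v v) (u : V) (k : ℕ) : Prop :=
  listCount w.support.tail u ≤ k

/-- `G` has a `k`-walk: a spanning closed walk using each edge at most twice and meeting
each vertex at most `k` times. -/
def HasKWalk (G : SimpleGraph V) (k : ℕ) : Prop :=
  ∃ (v : V) (w : G.Walk v v), IsGoodWalk w ∧ ∀ u, VisitsAtMost w u k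

/-- `G` has a `k`-trail: a spanning closed trail meeting each vertex at most `k` times. -/
def HasKTrail (G : SimpleGraph V) (k : ℕ) : Prop :=
  ∃ (v : V) (w : G.Walk v v), w.IsTrail ∧ (∀ u, u ∈ w.support) ∧ ∀ u, VisitsAtMost w u k

/-- `G` is 3-connected: at least 4 vertices, and deleting any set of at most 2 vertices
leaves a connected graph. -/
def ThreeConnected (G : SimpleGraph V) : Prop :=
  4 ≤ Nat.card V ∧ ∀ S : Set V, S.ncard ≤ 2 → (G.induce Sᶜ).Connected

/-- `G` is 5-connected: at least 6 vertices, and deleting any set of at most 4 vertices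
leaves a connected graph. -/
def FiveConnected (G : SimpleGraph V) : Prop :=
  6 ≤ Nat.card V ∧ ∀ S : Set V, S.ncard ≤ 4 → (G.induce Sᶜ).Connected

/-- `G` is minimally 3-connected. -/
def MinimallyThreeConnected (G : SimpleGraph V) : Prop :=
  ThreeConnected G ∧ ∀ e ∈ G.edgeSet, ¬ ThreeConnected (G.deleteEdges {e})

/-- The degree of `v` in `G` (as the cardinality of its neighbor set). -/
noncomputable def degreeN (G : SimpleGraph V) (v : V) : ℕ := (G.neighborSet v).ncard

/-- `R` is a minor of `G`: there are nonempty pairwise disjoint branch sets, one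
for each vertex of `R`, each inducing a connected subgraph of `G`, such that every
edge of `R` is realized by an edge of `G` between the corresponding branch sets. -/
def IsMinorOf {W : Type*} (R : SimpleGraph W) (G : SimpleGraph V) : Prop :=
  ∃ B : W → Set V,
    (∀ w, (B w).Nonempty) ∧
    (Pairwise fun w₁ w₂ => Disjoint (B w₁) (B w₂)) ∧
    (∀ w, (G.induce (B w)).Connected) ∧
    ∀ ⦃w₁ w₂⦄, R.Adj w₁ w₂ → ∃ u ∈ B w₁, ∃ u' ∈ B w₂, G.Adj u u'

/-- The graph `G/xy` obtained from `G` by contracting the edge between `x` and `y`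
(the vertex `y` is merged into `x`). -/
def contractEdge (G : SimpleGraph V) (x y : V) : SimpleGraph {v : V // v ≠ y} where
  Adj a b := a ≠ b ∧
    (G.Adj a.val b.val ∨ (a.val = x ∧ G.Adj y b.val) ∨ (b.val = x ∧ G.Adj a.val y))
  symm := by
    constructor
    rintro a b ⟨hab, h | ⟨h1, h2⟩ | ⟨h1, h2⟩⟩
    · exact ⟨hab.symm, Or.inl h.symm⟩
    · exact ⟨hab.symm, Or.inr (Or.inr ⟨h1, h2.symm⟩)⟩
    · exact ⟨hab.symm, Or.inr (Or.inl ⟨h1, h2.symm⟩)⟩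
  loopless := by constructor; rintro a ⟨h, -⟩; exact h rfl

open scoped Classical in
/-- The projection sending every vertex of `A` to the contracted vertex `none`
and every other vertex to itself. -/
noncomputable def projSet (A : Set V) (u : V) : Option {v : V // v ∉ A} :=
  if h : u ∈ A then none else some ⟨u, h⟩

/-- The graph `G/A` obtained from `G` by identifying all vertices of `A` to a single
vertex (deleting loops and merging parallel edges). -/
def contractSet (G : SimpleGraph V) (A : Set V) : SimpleGraph (Option {v : V // v ∉ A}) where
  Adj a b := a ≠ b ∧ ∃ u u', G.Adj u u' ∧ projSet A u = a ∧ projSet A u' = b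
  symm := by
    constructor
    rintro a b ⟨hab, u, u', h1, h2, h3⟩
    exact ⟨hab.symm, u', u, h1.symm, h3, h2⟩
  loopless := by constructor; rintro a ⟨h, -⟩; exact h rfl

/-- `s` is an independent set of `G`. -/
def IsIndepSet' (G : SimpleGraph V) (s : Set V) : Prop :=
  s.Pairwise fun a b => ¬ G.Adj a b

/-- The number of connected components of `G`. -/
noncomputable def numComponents (G : SimpleGraph V) : ℕ := Nat.card G.ConnectedComponent

/-- `G` is `m`-tree-connected: it has `m` pairwise edge-disjoint spanning trees. -/
def TreeConnected (m : ℕ) (G : SimpleGraph V) : Prop :=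
  ∃ T : Fin m → SimpleGraph V, (∀ i, T i ≤ G) ∧ (∀ i, (T i).IsTree) ∧
    Pairwise fun i j => Disjoint (T i).edgeSet (T j).edgeSet

/-- `A` is the vertex set of an `m`-tree-connected component of `G`, i.e. a maximal
subset of vertices inducing an `m`-tree-connected subgraph. -/
def IsMaxTCSet (m : ℕ) (G : SimpleGraph V) (A : Set V) : Prop :=
  TreeConnected m (G.induce A) ∧ ∀ B : Set V, A ⊆ B → TreeConnected m (G.induce B) → B = A

/-- `e_G(S)`: the number of edges of `G` with both ends in `S`. -/
noncomputable def edgesWithin (G : SimpleGraph V) (S : Set V) : ℕ :=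
  {e ∈ G.edgeSet | ∀ v ∈ e, v ∈ S}.ncard

/-- `Ω(G) = |P| - e_G(P)/2`, where `P` is the partition of `V(G)` into the
`2`-tree-connected components of `G` and `e_G(P)` is the number of edges of `G`
joining different parts of `P`. -/
noncomputable def Omega (G : SimpleGraph V) : ℚ :=
  ({A : Set V | IsMaxTCSet 2 G A}.ncard : ℚ) -
    (1 / 2) * ({e ∈ G.edgeSet | ¬ ∃ A, IsMaxTCSet 2 G A ∧ ∀ v ∈ e, v ∈ A}.ncard : ℚ)

end SimpleGraph

/-!
Number the components of `G - S` as `C₀, …, C_{c-1}` and the vertices of `S` as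
`s₀, …, s_{k-1}`. The closed walk leaves `s_{j mod k}`, sweeps through `C_j` and enters
`s_{(j+1) mod k}`, except that after the last component it returns to `s₀`; this is possible
because every vertex of `S` has a neighbour in every component. Each sweep is a walk through a
connected vertex set that uses every edge at most twice: start from a path and, while some
vertex is missed, take an edge `xy` leaving the current walk and insert the detour `x y x`.
Sweeps through different components share no edge, and a vertex of `S` is met only where a
sweep ends, i.e. at most `⌈c/k⌉` times.
-/

open Finset

theorem listCount_eq_count {α : Type*} [DecidableEq α] (l : List α) (a : α) :
    listCount l a = l.count a := by
  unfold listCount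
  congr
  exact Subsingleton.elim _ _

theorem Nat.card_filter_succ_mod_mod_eq_le {c k : ℕ} (hk : 0 < k) (i : ℕ) :
    #{j ∈ range c | (j + 1) % c % k = i} ≤ (c + k - 1) / k := by
  calc #{j ∈ range c | (j + 1) % c % k = i}
      ≤ #(range ((c + k - 1) / k)) := card_le_card_of_injOn (fun j => (j + 1) % c / k) ?_ ?_
    _ = (c + k - 1) / k := card_range _
  · intro j hj
    simp only [coe_filter, mem_range, Set.mem_ofPred_eq] at hj
    have hlt : (j + 1) % c < c := Nat.mod_lt _ (by omega)
    simp only [coe_range, Set.mem_Iio]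
    calc (j + 1) % c / k < (j + 1) % c / k + 1 := Nat.lt_succ_self _
      _ = ((j + 1) % c + k) / k := (Nat.add_div_right _ hk).symm
      _ ≤ (c + k - 1) / k := Nat.div_le_div_right (by omega)
  · intro j hj j' hj' h
    simp only [coe_filter, mem_range, Set.mem_ofPred_eq] at hj hj' h
    have hmod : (j + 1) % c = (j' + 1) % c := by
      rw [← Nat.div_add_mod ((j + 1) % c) k, ← Nat.div_add_mod ((j' + 1) % c) k, h, hj.2, hj'.2]
    exact Nat.ModEq.eq_of_lt_of_lt (Nat.ModEq.add_right_cancel' 1 hmod) hj.1 hj'.1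

theorem Nat.exists_lt_succ_mod_mod_eq {c k i : ℕ} (hi : i < k) (hkc : k ≤ c) :
    ∃ j < c, (j + 1) % c % k = i := by
  rcases Nat.eq_zero_or_pos i with rfl | hi0
  · exact ⟨c - 1, by omega, by rw [Nat.sub_add_cancel (by omega), Nat.mod_self, Nat.zero_mod]⟩
  · refine ⟨i - 1, by omega, ?_⟩
    rw [Nat.sub_add_cancel hi0, Nat.mod_eq_of_lt (show i < c by omega), Nat.mod_eq_of_lt hi]

namespace SimpleGraph
variable {V : Type*} {G : SimpleGraph V}

theorem ConnectedComponent.exists_walk_within {s : Set V} (C : (G.induce s).ConnectedComponent)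
    {x y : V} (hx : x ∈ (↑) '' C.supp) (hy : y ∈ (↑) '' C.supp) :
    ∃ p : G.Walk x y, ∀ z ∈ p.support, z ∈ ((↑) '' C.supp : Set V) := by
  obtain ⟨x, hx, rfl⟩ := hx
  obtain ⟨y, hy, rfl⟩ := hy
  obtain ⟨q⟩ := C.reachable_toSimpleGraph hx hy
  let f := (Embedding.induce s).toHom.comp C.toSimpleGraph_hom
  refine ⟨q.map f, fun z hz => ?_⟩
  have hz' : z ∈ q.support.map f := by rw [← Walk.support_map]; exact hz
  obtain ⟨z, -, rfl⟩ := List.mem_map.1 hz'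
  exact ⟨z.1, z.2, rfl⟩

variable [DecidableEq V]

namespace Walk

theorem exists_support_insert_of_adj {u v x y : V} (w : G.Walk u v) (hx : x ∈ w.support)
    (hxy : G.Adj x y) (hy : y ∉ w.support) (hw : ∀ e, w.edges.count e ≤ 2) :
    ∃ w' : G.Walk u v, (∀ z, z ∈ w'.support ↔ z = y ∨ z ∈ w.support) ∧
      ∀ e, w'.edges.count e ≤ 2 := by
  refine ⟨(w.takeUntil x hx).append (cons hxy (cons hxy.symm (w.dropUntil x hx))),
    fun z => ?_, fun e => ?_⟩
  · conv_rhs => rw [← w.take_spec hx]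
    simp only [mem_support_append_iff, support_cons, List.mem_cons]
    have := (w.dropUntil x hx).start_mem_support
    grind
  · have hxy_unused : s(x, y) ∉ w.edges := fun h => hy (w.snd_mem_support_of_mem_edges h)
    have hsplit := congrArg (fun p => p.edges.count e) (w.take_spec hx)
    simp only [edges_append, List.count_append] at hsplit
    have := hw e
    simp only [edges_append, edges_cons, List.count_append, List.count_cons, Sym2.eq_swap (a := y)]
    by_cases he : s(x, y) = e
    · subst he
      have := List.count_eq_zero.2 hxy_unused
      simp only [BEq.rfl, ↓reduceIte]
      omega
    · simp only [beq_iff_eq, he, ↓reduceIte, add_zero]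
      omega

variable (v : ℕ → V) (seg : ∀ j, G.Walk (v j) (v (j + 1)))

def concatSegments : ∀ n, G.Walk (v 0) (v n)
  | 0 => nil
  | n + 1 => (concatSegments n).append (seg n)

theorem count_tail_support_concatSegments (n : ℕ) (y : V) :
    (concatSegments v seg n).support.tail.count y =
      ∑ j ∈ range n, (seg j).support.tail.count y := by
  induction n with
  | zero => simp [concatSegments]
  | succ n ih => rw [concatSegments, tail_support_append, List.count_append, ih, sum_range_succ]

theorem count_edges_concatSegments (n : ℕ) (e : Sym2 V) :
    (concatSegments v seg n).edges.count e = ∑ j ∈ range n, (seg j).edges.count e := by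
  induction n with
  | zero => simp [concatSegments]
  | succ n ih => rw [concatSegments, edges_append, List.count_append, ih, sum_range_succ]

end Walk

theorem exists_walk_support_eq {A : Set V} (hA : A.Finite) {u v : V}
    (hreach : ∀ x ∈ A, ∃ p : G.Walk u x, ∀ y ∈ p.support, y ∈ A) (hv : v ∈ A) :
    ∃ w : G.Walk u v, {y | y ∈ w.support} = A ∧ ∀ e, w.edges.count e ≤ 2 := by
  suffices ∀ n, ∀ w : G.Walk u v, (∀ y ∈ w.support, y ∈ A) → (∀ e, w.edges.count e ≤ 2) →
      (A \ {y | y ∈ w.support}).ncard = n →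
      ∃ w : G.Walk u v, {y | y ∈ w.support} = A ∧ ∀ e, w.edges.count e ≤ 2 by
    obtain ⟨p, hp⟩ := hreach v hv
    refine this _ p.bypass (fun y hy => hp y (p.support_bypass_subset_support hy))
      (fun e => ?_) rfl
    exact (List.nodup_iff_count_le_one.1 p.bypass_isPath.isTrail.edges_nodup e).trans one_le_two
  intro n
  induction n using Nat.strong_induction_on with
  | _ n ih =>
  intro w hwA hw hn
  by_cases hcov : A ⊆ {y | y ∈ w.support}
  · exact ⟨w, subset_antisymm hwA hcov, hw⟩
  obtain ⟨t, htA, htw⟩ := Set.not_subset.1 hcov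
  obtain ⟨p, hp⟩ := hreach t htA
  obtain ⟨d, hd, hdw, hdw'⟩ :=
    p.exists_boundary_dart {y | y ∈ w.support} w.start_mem_support htw
  obtain ⟨w', hw'supp, hw'⟩ := w.exists_support_insert_of_adj hdw d.adj hdw' hw
  have hdA : d.snd ∈ A := hp _ (p.dart_snd_mem_support_of_mem_darts hd)
  refine ih _ ?_ w' (fun y hy => ?_) hw' rfl
  · rw [← hn]
    refine Set.ncard_lt_ncard ⟨fun z hz => ⟨hz.1, fun h => hz.2 ((hw'supp z).2 (Or.inr h))⟩,
      fun h => (h ⟨hdA, hdw'⟩).2 ((hw'supp _).2 (Or.inl rfl))⟩ hA.sdiff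
  · rcases (hw'supp y).1 hy with rfl | hy
    exacts [hdA, hwA y hy]

theorem exists_walk_through_set {A : Set V} (hA : A.Finite)
    (hreach : ∀ x ∈ A, ∀ y ∈ A, ∃ p : G.Walk x y, ∀ z ∈ p.support, z ∈ A)
    {x y a b : V} (hx : x ∉ A) (hy : y ∉ A) (ha : a ∈ A) (hb : b ∈ A)
    (hxa : G.Adj x a) (hby : G.Adj b y) :
    ∃ w : G.Walk x y, (∃ l : List V, w.support.tail = l ++ [y] ∧ {z | z ∈ l} = A) ∧
      (∀ e, w.edges.count e ≤ 2) ∧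
      ∀ e ∈ w.edges, (∃ z ∈ e, z ∈ A) ∧ ∀ z ∈ e, z ∈ A ∨ z = x ∨ z = y := by
  obtain ⟨T, hTA, hT⟩ := exists_walk_support_eq hA (hreach a ha) hb
  have hTA' : ∀ z, z ∈ T.support ↔ z ∈ A := fun z => Set.ext_iff.1 hTA z
  refine ⟨Walk.cons hxa (T.concat hby), ⟨T.support, by simp, hTA⟩, fun e => ?_, fun e he => ?_⟩
  · have hcount := hT e
    have hxT : s(x, a) = e → T.edges.count e = 0 := by
      rintro rfl
      exact List.count_eq_zero.2 fun h => hx ((hTA' x).1 (T.fst_mem_support_of_mem_edges h))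
    have hyT : s(b, y) = e → T.edges.count e = 0 := by
      rintro rfl
      exact List.count_eq_zero.2 fun h => hy ((hTA' y).1 (T.snd_mem_support_of_mem_edges h))
    simp only [Walk.edges_cons, Walk.edges_concat, List.concat_eq_append, List.count_cons,
      List.count_append, beq_iff_eq]
    split_ifs <;> simp_all
  · simp only [Walk.edges_cons, Walk.edges_concat, List.concat_eq_append, List.mem_cons,
      List.mem_append, List.not_mem_nil, or_false] at he
    rcases he with rfl | he | rfl
    · exact ⟨⟨a, Sym2.mem_mk_right x a, ha⟩, fun z hz => by
        rcases Sym2.mem_iff.1 hz with rfl | rfl <;> simp [ha]⟩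
    · have heA : ∀ z ∈ e, z ∈ A := fun z hz => (hTA' z).1 (T.mem_support_of_mem_edges he hz)
      induction e using Sym2.ind with
      | h z₁ z₂ => exact ⟨⟨z₁, Sym2.mem_mk_left z₁ z₂, heA z₁ (Sym2.mem_mk_left z₁ z₂)⟩,
          fun z hz => Or.inl (heA z hz)⟩
    · exact ⟨⟨b, Sym2.mem_mk_left b y, hb⟩, fun z hz => by
        rcases Sym2.mem_iff.1 hz with rfl | rfl <;> simp [hb]⟩

theorem exists_walk_through_pieces {S : Set V} {A : ℕ → Set V} {v : ℕ → V} (n : ℕ)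
    (hv : ∀ j, v j ∈ S) (hAS : ∀ j, Disjoint (A j) S) (hA : ∀ j, (A j).Finite)
    (hreach : ∀ j, ∀ x ∈ A j, ∀ y ∈ A j, ∃ p : G.Walk x y, ∀ z ∈ p.support, z ∈ A j)
    (hdisj : (Set.Iio n).PairwiseDisjoint A)
    (hin : ∀ j, ∃ a ∈ A j, G.Adj (v j) a) (hout : ∀ j, ∃ b ∈ A j, G.Adj b (v (j + 1))) :
    ∃ w : G.Walk (v 0) (v n), (∀ j < n, A j ⊆ {z | z ∈ w.support}) ∧
      (∀ e, w.edges.count e ≤ 2) ∧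
      ∀ u ∈ S, w.support.tail.count u = #{j ∈ range n | v (j + 1) = u} := by
  have hvA : ∀ i j, v i ∉ A j := fun i j h => Set.disjoint_left.1 (hAS j) h (hv i)
  choose a ha hva using hin
  choose b hb hbv using hout
  choose seg hsupp hcount hedges using fun j => exists_walk_through_set (hA j) (hreach j)
    (hvA j j) (hvA (j + 1) j) (ha j) (hb j) (hva j) (hbv j)
  refine ⟨Walk.concatSegments v seg n, fun j hj z hz => ?_, fun e => ?_, fun u hu => ?_⟩
  · obtain ⟨l, hl, hlA⟩ := hsupp j
    rw [← hlA] at hz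
    apply List.mem_of_mem_tail
    rw [← List.count_pos_iff, Walk.count_tail_support_concatSegments]
    refine sum_pos_iff.2 ⟨j, mem_range.2 hj, List.count_pos_iff.2 ?_⟩
    exact hl ▸ List.mem_append_left _ hz
  · have huniq : ∀ i ∈ range n, ∀ j ∈ range n, e ∈ (seg i).edges → e ∈ (seg j).edges → i = j := by
      intro i hi j hj hei hej
      obtain ⟨z, hze, hzA⟩ := (hedges i e hei).1
      by_contra hij
      rcases (hedges j e hej).2 z hze with hz | rfl | rfl
      · exact Set.disjoint_left.1 (hdisj (mem_range.1 hi) (mem_range.1 hj) hij) hzA hz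
      · exact hvA _ _ hzA
      · exact hvA _ _ hzA
    rw [Walk.count_edges_concatSegments]
    by_cases he : ∃ i ∈ range n, e ∈ (seg i).edges
    · obtain ⟨i, hi, hei⟩ := he
      rw [sum_eq_single_of_mem i hi fun j hj hji =>
        List.count_eq_zero.2 fun hej => hji (huniq j hj i hi hej hei)]
      exact hcount i e
    · push Not at he
      rw [sum_eq_zero fun j hj => List.count_eq_zero.2 (he j hj)]
      exact zero_le_two
  · rw [Walk.count_tail_support_concatSegments, card_filter]
    refine sum_congr rfl fun j _ => ?_
    obtain ⟨l, hl, hlA⟩ := hsupp j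
    have hul : u ∉ l := fun h => Set.disjoint_right.1 (hAS j) hu (hlA ▸ h)
    rw [hl, List.count_append, List.count_eq_zero.2 hul, List.count_singleton, zero_add]
    simp only [beq_iff_eq]

theorem exists_walk_through_components [Finite V] {S : Set V}
    {C : ℕ → (G.induce Sᶜ).ConnectedComponent} {v : ℕ → V} (n : ℕ)
    (hv : ∀ j, v j ∈ S) (hC : (Set.Iio n).InjOn C)
    (hnb : ∀ (D : (G.induce Sᶜ).ConnectedComponent), ∀ s ∈ S, ∃ u ∈ D.supp, G.Adj s u) :
    ∃ w : G.Walk (v 0) (v n), (∀ j < n, ∀ u ∈ (C j).supp, ↑u ∈ w.support) ∧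
      (∀ e, w.edges.count e ≤ 2) ∧
      ∀ u ∈ S, w.support.tail.count u = #{j ∈ range n | v (j + 1) = u} := by
  obtain ⟨w, hcov, hedges, hcount⟩ := exists_walk_through_pieces
    (A := fun j => (↑) '' (C j).supp) n hv
    (fun j => Set.disjoint_left.2 fun _ ⟨z, _, hz⟩ => hz ▸ z.2) (fun j => Set.toFinite _)
    (fun j _ hx _ hy => (C j).exists_walk_within hx hy)
    (fun i hi j hj hij => (Set.disjoint_image_iff Subtype.val_injective).2 <|
      pairwise_disjoint_supp_connectedComponent _ fun h => hij (hC hi hj h))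
    (fun j => by obtain ⟨u, hu, hadj⟩ := hnb (C j) _ (hv j); exact ⟨u, ⟨u, hu, rfl⟩, hadj⟩)
    (fun j => by obtain ⟨u, hu, hadj⟩ := hnb (C j) _ (hv _); exact ⟨u, ⟨u, hu, rfl⟩, hadj.symm⟩)
  exact ⟨w, fun j hj u hu => hcov j hj ⟨u, hu, rfl⟩, hedges, hcount⟩

theorem exists_closed_walk_count_le_of_forall_component_adj [Finite V] {S : Set V} {k c : ℕ}
    (hS : S.ncard = k) (hk : 0 < k) (hkc : k ≤ c)
    (hcomp : Nat.card (G.induce Sᶜ).ConnectedComponent = c)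
    (hnb : ∀ (C : (G.induce Sᶜ).ConnectedComponent), ∀ s ∈ S, ∃ u ∈ C.supp, G.Adj s u) :
    ∃ (x : V) (w : G.Walk x x), (∀ u, u ∈ w.support) ∧ (∀ e, w.edges.count e ≤ 2) ∧
      ∀ u ∈ S, w.support.tail.count u ≤ (c + k - 1) / k := by
  have hc : 0 < c := hk.trans_le hkc
  obtain ⟨σ⟩ : Nonempty (Fin k ≃ S) := Finite.card_eq.1 (by simp [hS])
  obtain ⟨f⟩ : Nonempty (Fin c ≃ (G.induce Sᶜ).ConnectedComponent) :=
    Finite.card_eq.1 (by simp [hcomp])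
  let C : ℕ → (G.induce Sᶜ).ConnectedComponent := fun j => f ⟨j % c, Nat.mod_lt _ hc⟩
  let v : ℕ → V := fun j => σ ⟨j % c % k, Nat.mod_lt _ hk⟩
  have hCj : ∀ j (hj : j < c), C j = f ⟨j, hj⟩ := fun j hj => by
    simp only [C, Nat.mod_eq_of_lt hj]
  have hv : ∀ j, ∀ u (hu : u ∈ S), v j = u ↔ j % c % k = σ.symm ⟨u, hu⟩ := fun j u hu => by
    change ((σ _ : S) : V) = ((⟨u, hu⟩ : S) : V) ↔ _
    rw [← Subtype.ext_iff, ← Equiv.eq_symm_apply, Fin.ext_iff]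
  have hC : (Set.Iio c).InjOn C := fun i hi j hj h =>
    Fin.mk.inj_iff.1 (f.injective ((hCj i hi).symm.trans (h.trans (hCj j hj))))
  obtain ⟨w, hcov, hedges, hcount⟩ :=
    exists_walk_through_components (v := v) c (fun j => (σ _).2) hC hnb
  have hcount_mod : ∀ u (hu : u ∈ S),
      w.support.tail.count u = #{j ∈ range c | (j + 1) % c % k = σ.symm ⟨u, hu⟩} :=
    fun u hu => by simp only [hcount u hu, hv _ u hu]
  have hvc : v c = v 0 := by simp only [v, Nat.mod_self, Nat.zero_mod]
  refine ⟨v 0, w.copy rfl hvc, fun u => ?_, by simpa only [Walk.edges_copy] using hedges,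
    fun u hu => ?_⟩
  · rw [Walk.support_copy]
    by_cases hu : u ∈ S
    · obtain ⟨j, hj, hju⟩ := Nat.exists_lt_succ_mod_mod_eq (σ.symm ⟨u, hu⟩).2 hkc
      refine List.mem_of_mem_tail (List.count_pos_iff.1 ?_)
      rw [hcount_mod u hu, card_pos]
      exact ⟨j, mem_filter.2 ⟨mem_range.2 hj, hju⟩⟩
    · let j := f.symm ((G.induce Sᶜ).connectedComponentMk ⟨u, hu⟩)
      exact hcov j j.2 ⟨u, hu⟩ (by simp [hCj j j.2, j, ConnectedComponent.mem_supp_iff])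
  · rw [Walk.support_copy, hcount_mod u hu]
    exact Nat.card_filter_succ_mod_mod_eq_le hk _

end SimpleGraph

open SimpleGraph in
theorem statement15_general {V : Type} [Finite V] (G : SimpleGraph V)
    (S : Set V) (hS3 : S.ncard = 3) (c : ℕ) (hc : 3 ≤ c)
    (hcomp : numComponents (G.induce Sᶜ) = c)
    (hnb : ∀ (C : (G.induce Sᶜ).ConnectedComponent), ∀ s ∈ S,
      ∃ u : ↥(Sᶜ), (G.induce Sᶜ).connectedComponentMk u = C ∧ G.Adj s u.val) :
    ∃ (v : V) (w : G.Walk v v), IsGoodWalk w ∧ ∀ u ∈ S, VisitsAtMost w u ((c + 2) / 3) := by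
  classical
  obtain ⟨x, w, hspan, hedges, hvisits⟩ :=
    exists_closed_walk_count_le_of_forall_component_adj hS3 three_pos hc hcomp hnb
  refine ⟨x, w, ⟨hspan, fun e => ?_⟩, fun u hu => ?_⟩
  · rw [listCount_eq_count]
    exact hedges e
  · rw [VisitsAtMost, listCount_eq_count]
    exact hvisits u hu

open SimpleGraph in
/-- Let `G` be a 3-connected finite simple graph and `S` an independent set
of exactly 3 vertices such that `G − S` has exactly `c ≥ 3` connected components and every
component of `G − S` contains a neighbour of each of the three vertices of `S`. Then `G`
has a spanning closed walk (using each edge at most twice) meeting each vertex of `S` at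
most `⌈c/3⌉` times. -/
theorem statement15 {V : Type} [Finite V] (G : SimpleGraph V) (h3 : ThreeConnected G)
    (S : Set V) (hS : G.IsIndepSet' S) (hS3 : S.ncard = 3) (c : ℕ) (hc : 3 ≤ c)
    (hcomp : numComponents (G.induce Sᶜ) = c)
    (hnb : ∀ (C : (G.induce Sᶜ).ConnectedComponent), ∀ s ∈ S,
      ∃ u : ↥(Sᶜ), (G.induce Sᶜ).connectedComponentMk u = C ∧ G.Adj s u.val) :
    ∃ (v : V) (w : G.Walk v v), IsGoodWalk w ∧ ∀ u ∈ S, VisitsAtMost w u ((c + 2) / 3) :=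
  statement15_general G S hS3 c hc hcomp hnb
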